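/- arXiv:1305.0087 — 3 statements merged into one kernel-verified Lean document; each statement's English description precedes it below -/
import Mathlib

section
/- Let U be an (α, β)-conditioned basis and τ ∈ [1/2, 1), and assume ‖U‖₁ > 0. Then for every row i and every y ∈ ℝ^d, ρ_τ(U_{(i)} y) ≤ (‖U_{(i)}‖₁/‖U‖₁)·(τ/(1−τ))·αβ·ρ_τ(Uy). -/
open Matrix MeasureTheory ProbabilityTheory BigOperators

noncomputable def rho (τ z : ℝ) : ℝ := if 0 ≤ z then τ * z else (τ - 1) * z

noncomputable def rhoV (τ : ℝ) {n : ℕ} (x : Fin n → ℝ) : ℝ := ∑ i, rho τ (x i)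

noncomputable def l1 {n : ℕ} (x : Fin n → ℝ) : ℝ := ∑ i, |x i|

noncomputable def linf {n : ℕ} (x : Fin n → ℝ) : ℝ := ⨆ i, |x i|

noncomputable def l2 {n : ℕ} (x : Fin n → ℝ) : ℝ := Real.sqrt (∑ i, (x i)^2)

noncomputable def l1M {n d : ℕ} (U : Matrix (Fin n) (Fin d) ℝ) : ℝ := ∑ i, ∑ j, |U i j|

lemma rho_le_abs {τ z : ℝ} (h1 : 1/2 ≤ τ) : rho τ z ≤ τ * |z| := by
  unfold rho
  split_ifs with h
  · rw [abs_of_nonneg h]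
  · rw [abs_of_neg (lt_of_not_ge h)]; nlinarith [lt_of_not_ge h]

lemma abs_le_rho {τ z : ℝ} (h1 : 1/2 ≤ τ) : (1 - τ) * |z| ≤ rho τ z := by
  unfold rho
  split_ifs with h
  · rw [abs_of_nonneg h]; nlinarith
  · rw [abs_of_neg (lt_of_not_ge h)]; ring_nf; linarith

theorem conditioned_row_rho_bound {n d : ℕ} (U : Matrix (Fin n) (Fin d) ℝ) (α β τ : ℝ)
    (hτ : 1/2 ≤ τ ∧ τ < 1)
    (hα : l1M U ≤ α)
    (hβ : ∀ x : Fin d → ℝ, linf x ≤ β * l1 (U.mulVec x))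
    (hU : 0 < l1M U)
    (i : Fin n) (y : Fin d → ℝ) :
    rho τ (∑ j, U i j * y j) ≤
      ((∑ j, |U i j|) / l1M U) * (τ / (1 - τ)) * (α * β) * rhoV τ (U.mulVec y) := by
  obtain ⟨hτ1, hτ2⟩ := hτ
  have hτpos : 0 < τ := by linarith
  have h1τ : 0 < 1 - τ := by linarith
  by_cases hy : y = 0
  · subst hy
    simp [rho, rhoV, Matrix.mulVec, dotProduct]
  · -- y ≠ 0, so some coordinate is nonzero
    obtain ⟨j0, hj0⟩ : ∃ j, y j ≠ 0 := by
      by_contra h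
      push_neg at h
      exact hy (funext h)
    set M := l1M U with hM
    set r := ∑ j, |U i j| with hr
    set L := l1 (U.mulVec y) with hLdef
    set V := rhoV τ (U.mulVec y) with hV
    have hr0 : 0 ≤ r := Finset.sum_nonneg fun _ _ => abs_nonneg _
    have hrM : r ≤ M := by
      apply Finset.single_le_sum (f := fun i => ∑ j, |U i j|) _ (Finset.mem_univ i)
      intro k _
      exact Finset.sum_nonneg fun _ _ => abs_nonneg _
    have hL0 : 0 ≤ L := Finset.sum_nonneg fun _ _ => abs_nonneg _
    have hlinf : |y j0| ≤ linf y := by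
      rw [linf]
      exact le_ciSup (f := fun j => |y j|) (Set.Finite.bddAbove (Set.finite_range _)) j0
    have hlinfpos : 0 < linf y := lt_of_lt_of_le (abs_pos.2 hj0) hlinf
    have hβL : 0 < β * L := lt_of_lt_of_le hlinfpos (hβ y)
    have hβ0 : 0 < β := by
      rcases lt_or_ge 0 β with h | h
      · exact h
      · nlinarith
    have hLV : (1 - τ) * L ≤ V := by
      rw [hLdef, hV, l1, rhoV, Finset.mul_sum]
      exact Finset.sum_le_sum fun k _ => abs_le_rho hτ1
    have hV0 : 0 ≤ V := le_trans (by positivity) hLV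
    -- main chain
    have h1 : rho τ (∑ j, U i j * y j) ≤ τ * (r * linf y) := by
      refine le_trans (rho_le_abs hτ1) ?_
      apply mul_le_mul_of_nonneg_left _ (le_of_lt hτpos)
      calc |∑ j, U i j * y j| ≤ ∑ j, |U i j * y j| := Finset.abs_sum_le_sum_abs _ _
        _ ≤ ∑ j, |U i j| * linf y := by
            apply Finset.sum_le_sum
            intro k _
            rw [abs_mul]
            have : |y k| ≤ linf y := by
              rw [linf]
              exact le_ciSup (f := fun j => |y j|) (Set.Finite.bddAbove (Set.finite_range _)) k
            exact mul_le_mul_of_nonneg_left this (abs_nonneg _)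
        _ = r * linf y := by rw [hr, Finset.sum_mul]
    have h2 : τ * (r * linf y) ≤ τ * (r * (β * L)) := by
      apply mul_le_mul_of_nonneg_left _ (le_of_lt hτpos)
      exact mul_le_mul_of_nonneg_left (hβ y) hr0
    have h3 : τ * (r * (β * L)) ≤ τ * (r * (β * (V / (1 - τ)))) := by
      apply mul_le_mul_of_nonneg_left _ (le_of_lt hτpos)
      apply mul_le_mul_of_nonneg_left _ hr0
      apply mul_le_mul_of_nonneg_left _ (le_of_lt hβ0)
      rw [le_div_iff₀ h1τ]
      linarith [hLV]
    have hkey : r ≤ r * α / M := by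
      rw [le_div_iff₀ hU]
      nlinarith
    have h4 : τ * (r * (β * (V / (1 - τ)))) ≤ (r / M) * (τ / (1 - τ)) * (α * β) * V := by
      have : (r / M) * (τ / (1 - τ)) * (α * β) * V = (τ / (1 - τ) * (β * V)) * (r * α / M) := by
        field_simp
      rw [this]
      have h5 : τ * (r * (β * (V / (1 - τ)))) = (τ / (1 - τ) * (β * V)) * r := by
        field_simp
      rw [h5]
      exact mul_le_mul_of_nonneg_left hkey (by positivity)
    linarith
end

section
/- Let Z_γ be a γ-net of the set Z = {z ∈ V : ‖z‖₁ ≤ 1} for a linear subspace V of ℝ^n, let τ ∈ [1/2, 1) and ε ∈ (0, 1/2). Suppose S is a diagonal nonnegative matrix such that (i) |ρ_τ(S z_γ) − ρ_τ(z_γ)| ≤ (ε/3)ρ_τ(z_γ) for every z_γ ∈ Z_γ, and (ii) (1/3)‖v‖₁ ≤ ‖Sv‖₁ ≤ (5/3)‖v‖₁ for every v ∈ V. If γ = ((1−τ)/(6τ))·ε, then for every z ∈ V with ‖z‖₁ = 1, |ρ_τ(Sz) − ρ_τ(z)| ≤ ε·ρ_τ(z). -/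
open Matrix MeasureTheory ProbabilityTheory BigOperators

/-! The net point `zγ` near `z` transfers the bound (i) to `z` at the cost of three errors:
`ρ_τ(Sz) ≈ ρ_τ(S zγ)` and `ρ_τ(zγ) ≈ ρ_τ(z)` by the `τ`-Lipschitz property of `ρ_τ` and the
upper `ℓ¹` bound (ii), each of size `O(τγ)`. The choice of `γ` makes `τγ = (1-τ)ε/6`, and
`(1-τ) ≤ ρ_τ(z)` because `‖z‖₁ = 1`, so these errors are absorbed into `ε ρ_τ(z)`. -/

section Rho

variable {τ : ℝ}

lemma abs_rho_sub_rho_le (hτ : 1/2 ≤ τ) (x y : ℝ) : |rho τ x - rho τ y| ≤ τ * |x - y| := by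
  unfold rho
  rcases abs_cases (x - y) with ⟨_, _⟩ | ⟨_, _⟩ <;>
    split_ifs <;> rw [abs_le] <;> constructor <;> nlinarith

lemma one_sub_mul_abs_le_rho (hτ : 1/2 ≤ τ) (x : ℝ) : (1 - τ) * |x| ≤ rho τ x := by
  unfold rho
  rcases abs_cases x with ⟨_, _⟩ | ⟨_, _⟩ <;> split_ifs <;> nlinarith

variable {n : ℕ}

lemma l1_sub_comm (x y : Fin n → ℝ) : l1 (x - y) = l1 (y - x) := by
  simp only [l1, Pi.sub_apply, abs_sub_comm]

lemma abs_rhoV_sub_rhoV_le (hτ : 1/2 ≤ τ) (x y : Fin n → ℝ) :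
    |rhoV τ x - rhoV τ y| ≤ τ * l1 (x - y) := by
  rw [rhoV, rhoV, l1, ← Finset.sum_sub_distrib, Finset.mul_sum]
  exact (Finset.abs_sum_le_sum_abs _ _).trans
    (Finset.sum_le_sum fun i _ => abs_rho_sub_rho_le hτ (x i) (y i))

lemma one_sub_mul_l1_le_rhoV (hτ : 1/2 ≤ τ) (x : Fin n → ℝ) :
    (1 - τ) * l1 x ≤ rhoV τ x := by
  rw [rhoV, l1, Finset.mul_sum]
  exact Finset.sum_le_sum fun i _ => one_sub_mul_abs_le_rho hτ (x i)

end Rho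

/-- The bookkeeping of the net argument: with `a = ρ_τ(Sz)`, `a' = ρ_τ(S zγ)`, `b' = ρ_τ(zγ)`,
`b = ρ_τ(z)` and `δ = τγ`. -/
lemma abs_sub_le_mul_of_approx {a a' b' b δ ε : ℝ} (hε : 0 ≤ ε) (hε4 : ε ≤ 4)
    (haa' : |a - a'| ≤ 5/3 * δ) (ha'b' : |a' - b'| ≤ ε/3 * b') (hb'b : |b' - b| ≤ δ)
    (hδ : δ ≤ ε/6 * b) :
    |a - b| ≤ ε * b := by
  rw [abs_le] at *
  have hδ0 : 0 ≤ δ := by linarith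
  constructor <;> nlinarith

theorem net_argument_general {n : ℕ} (V : Submodule ℝ (Fin n → ℝ)) (Zγ : Set (Fin n → ℝ))
    (τ ε γ : ℝ) (hτ : 1/2 ≤ τ ∧ τ < 1) (hε : 0 < ε ∧ ε < 1/2)
    (hγ : γ = ((1 - τ) / (6 * τ)) * ε)
    (hZγsub : Zγ ⊆ {z | z ∈ V ∧ l1 z ≤ 1})
    (hnet : ∀ z, z ∈ V → l1 z ≤ 1 → ∃ zγ ∈ Zγ, l1 (z - zγ) ≤ γ)
    (f : Fin n → ℝ)
    (hnetbd : ∀ zγ ∈ Zγ,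
      |rhoV τ ((Matrix.diagonal f).mulVec zγ) - rhoV τ zγ| ≤ (ε/3) * rhoV τ zγ)
    (hl1dist : ∀ v ∈ V, (1/3) * l1 v ≤ l1 ((Matrix.diagonal f).mulVec v) ∧
      l1 ((Matrix.diagonal f).mulVec v) ≤ (5/3) * l1 v)
    (z : Fin n → ℝ) (hz : z ∈ V) (hz1 : l1 z = 1) :
    |rhoV τ ((Matrix.diagonal f).mulVec z) - rhoV τ z| ≤ ε * rhoV τ z := by
  set S := Matrix.diagonal f
  have hτ0 : 0 < τ := by linarith [hτ.1]
  obtain ⟨zγ, hzγ, hdist⟩ := hnet z hz hz1.le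
  have hSdist : l1 (S *ᵥ z - S *ᵥ zγ) ≤ 5/3 * γ := by
    rw [← mulVec_sub]
    linarith [(hl1dist _ (V.sub_mem hz (hZγsub hzγ).1)).2]
  have hSz : |rhoV τ (S *ᵥ z) - rhoV τ (S *ᵥ zγ)| ≤ 5/3 * (τ * γ) := by
    nlinarith [abs_rhoV_sub_rhoV_le hτ.1 (S *ᵥ z) (S *ᵥ zγ)]
  have hzγz : |rhoV τ zγ - rhoV τ z| ≤ τ * γ := by
    nlinarith [abs_rhoV_sub_rhoV_le hτ.1 zγ z, l1_sub_comm zγ z]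
  have hτγ : τ * γ ≤ ε/6 * rhoV τ z := by
    have hρz : 1 - τ ≤ rhoV τ z := by simpa [hz1] using one_sub_mul_l1_le_rhoV hτ.1 z
    have : τ * γ = (1 - τ) * ε / 6 := by
      rw [hγ]; field_simp
    nlinarith [hε.1]
  exact abs_sub_le_mul_of_approx hε.1.le (by linarith [hε.2]) hSz (hnetbd zγ hzγ) hzγz hτγ

theorem net_argument {n : ℕ} (V : Submodule ℝ (Fin n → ℝ)) (Zγ : Set (Fin n → ℝ))
    (τ ε γ : ℝ) (hτ : 1/2 ≤ τ ∧ τ < 1) (hε : 0 < ε ∧ ε < 1/2)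
    (hγ : γ = ((1 - τ) / (6 * τ)) * ε)
    (hZγsub : Zγ ⊆ {z | z ∈ V ∧ l1 z ≤ 1})
    (hnet : ∀ z, z ∈ V → l1 z ≤ 1 → ∃ zγ ∈ Zγ, l1 (z - zγ) ≤ γ)
    (f : Fin n → ℝ) (hf : ∀ i, 0 ≤ f i)
    (hnetbd : ∀ zγ ∈ Zγ,
      |rhoV τ ((Matrix.diagonal f).mulVec zγ) - rhoV τ zγ| ≤ (ε/3) * rhoV τ zγ)
    (hl1dist : ∀ v ∈ V, (1/3) * l1 v ≤ l1 ((Matrix.diagonal f).mulVec v) ∧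
      l1 ((Matrix.diagonal f).mulVec v) ≤ (5/3) * l1 v)
    (z : Fin n → ℝ) (hz : z ∈ V) (hz1 : l1 z = 1) :
    |rhoV τ ((Matrix.diagonal f).mulVec z) - rhoV τ z| ≤ ε * rhoV τ z :=
  net_argument_general V Zγ τ ε γ hτ hε hγ hZγsub hnet f hnetbd hl1dist z hz hz1
end

section
/- Let U ∈ ℝ^{n×d} be (α, β)-conditioned with ‖U‖₁ > 0, let τ ∈ [1/2, 1), and fix y ∈ ℝ^d. Define, for s > 0, probabilities p_i ≥ min{1, s·‖U_{(i)}‖₁/‖U‖₁}, and let S be the random diagonal matrix with S_{ii} = 1/p_i with probability p_i and 0 otherwise, independently. Then E[ρ_τ(SUy)] = ρ_τ(Uy), and Var[ρ_τ(SUy)] ≤ (1/s)·(τ/(1−τ))·αβ·ρ_τ(Uy)². -/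
/-! Because `rho τ` is positively homogeneous and the weights `D i` are nonnegative,
`ρ_τ(SUy) = ∑ᵢ D i · ρ_τ((Uy)_i)` almost surely: a linear combination of independent weights of
mean `1` and variance `1/pᵢ - 1`. This gives the mean, and the variance
`∑ᵢ (1/pᵢ - 1) ρ_τ((Uy)_i)²`. A row with `pᵢ < 1` has `1/pᵢ ≤ ‖U‖₁ / (s ‖U_(i)‖₁)`, while
`ρ_τ((Uy)_i) ≤ τ ‖U_(i)‖₁ ‖y‖_∞` and `‖y‖_∞ ≤ β ‖Uy‖₁ ≤ β ρ_τ(Uy) / (1 - τ)`; so the row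
contributes at most `(τ / (1 - τ)) (αβ / s) ρ_τ((Uy)_i) ρ_τ(Uy)`, and summing over rows gives
the bound. -/

open Matrix MeasureTheory ProbabilityTheory BigOperators

section QuantileLoss

variable {τ : ℝ}

lemma rho_nonneg (h0 : 0 ≤ τ) (h1 : τ ≤ 1) (z : ℝ) : 0 ≤ rho τ z := by
  unfold rho; split <;> nlinarith

lemma rho_mul_of_nonneg (τ : ℝ) {c : ℝ} (hc : 0 ≤ c) (z : ℝ) : rho τ (c * z) = c * rho τ z := by
  rcases hc.eq_or_lt with rfl | hc
  · simp [rho]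
  · unfold rho
    by_cases hz : 0 ≤ z
    · rw [if_pos hz, if_pos (by positivity)]; ring
    · rw [if_neg hz, if_neg (by nlinarith)]; ring

lemma rho_le_mul_abs (hτ : 1 / 2 ≤ τ) (z : ℝ) : rho τ z ≤ τ * |z| := by
  unfold rho; split
  · rw [abs_of_nonneg ‹_›]
  · rw [abs_of_neg (by linarith)]; nlinarith

lemma mul_abs_le_rho (hτ : 1 / 2 ≤ τ) (z : ℝ) : (1 - τ) * |z| ≤ rho τ z := by
  unfold rho; split
  · rw [abs_of_nonneg ‹_›]; nlinarith
  · rw [abs_of_neg (by linarith)]; nlinarith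

variable {n : ℕ}

lemma mul_l1_le_rhoV (hτ : 1 / 2 ≤ τ) (x : Fin n → ℝ) : (1 - τ) * l1 x ≤ rhoV τ x := by
  rw [l1, Finset.mul_sum]
  exact Finset.sum_le_sum fun i _ => mul_abs_le_rho hτ (x i)

lemma rhoV_le_mul_l1 (hτ : 1 / 2 ≤ τ) (x : Fin n → ℝ) : rhoV τ x ≤ τ * l1 x := by
  rw [l1, Finset.mul_sum]
  exact Finset.sum_le_sum fun i _ => rho_le_mul_abs hτ (x i)

lemma rhoV_nonneg (h0 : 0 ≤ τ) (h1 : τ ≤ 1) (x : Fin n → ℝ) : 0 ≤ rhoV τ x :=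
  Finset.sum_nonneg fun i _ => rho_nonneg h0 h1 (x i)

end QuantileLoss

section Norms

variable {n d : ℕ}

lemma l1_nonneg (x : Fin n → ℝ) : 0 ≤ l1 x :=
  Finset.sum_nonneg fun i _ => abs_nonneg (x i)

lemma linf_nonneg (x : Fin n → ℝ) : 0 ≤ linf x :=
  Real.iSup_nonneg fun i => abs_nonneg (x i)

lemma abs_le_linf (x : Fin n → ℝ) (i : Fin n) : |x i| ≤ linf x :=
  le_ciSup (f := fun i => |x i|) (Finite.bddAbove_range _) i

lemma abs_mulVec_le (U : Matrix (Fin n) (Fin d) ℝ) (y : Fin d → ℝ) (i : Fin n) :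
    |(U *ᵥ y) i| ≤ (∑ j, |U i j|) * linf y :=
  calc |(U *ᵥ y) i| = |∑ j, U i j * y j| := rfl
    _ ≤ ∑ j, |U i j| * |y j| := by
      simpa only [abs_mul] using Finset.abs_sum_le_sum_abs (fun j => U i j * y j) Finset.univ
    _ ≤ (∑ j, |U i j|) * linf y := by
      rw [Finset.sum_mul]
      exact Finset.sum_le_sum fun j _ => by gcongr; exact abs_le_linf y j

lemma row_l1_le_l1M (U : Matrix (Fin n) (Fin d) ℝ) (i : Fin n) : ∑ j, |U i j| ≤ l1M U :=
  Finset.single_le_sum (f := fun i => ∑ j, |U i j|)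
    (fun i _ => Finset.sum_nonneg fun j _ => abs_nonneg (U i j)) (Finset.mem_univ i)

end Norms

section InverseBernoulli

variable {Ω : Type*} [MeasurableSpace Ω] {μ : Measure Ω}

structure IsInverseBernoulli (μ : Measure Ω) (X : Ω → ℝ) (q : ℝ) : Prop where
  measurable : Measurable X
  ae_eq : ∀ᵐ ω ∂μ, X ω = 1 / q ∨ X ω = 0
  measure_eq : μ {ω | X ω = 1 / q} = ENNReal.ofReal q

namespace IsInverseBernoulli

variable {X : Ω → ℝ} {q : ℝ}

lemma ae_nonneg (hX : IsInverseBernoulli μ X q) (hq : 0 < q) : ∀ᵐ ω ∂μ, 0 ≤ X ω := by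
  filter_upwards [hX.ae_eq] with ω h
  rcases h with h | h <;> simp [h, hq.le]

lemma ae_eq_indicator (hX : IsInverseBernoulli μ X q) (hq : q ≠ 0) :
    X =ᵐ[μ] {ω | X ω = 1 / q}.indicator fun _ => 1 / q := by
  filter_upwards [hX.ae_eq] with ω h
  rcases h with h | h
  · rw [Set.indicator_of_mem (s := {ω | X ω = 1 / q}) h, h]
  · rw [Set.indicator_of_notMem (s := {ω | X ω = 1 / q})
      fun h' => one_div_ne_zero hq (Eq.trans (Eq.symm h') h), h]

lemma sq_ae_eq (hX : IsInverseBernoulli μ X q) : X ^ 2 =ᵐ[μ] fun ω => 1 / q * X ω := by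
  filter_upwards [hX.ae_eq] with ω h
  rcases h with h | h <;> simp [h, sq]

lemma memLp [IsFiniteMeasure μ] (hX : IsInverseBernoulli μ X q) (p : ENNReal) : MemLp X p μ :=
  MemLp.of_bound hX.measurable.aestronglyMeasurable |1 / q| <| by
    filter_upwards [hX.ae_eq] with ω h
    rcases h with h | h <;> simp [h]

lemma integral_eq_one (hX : IsInverseBernoulli μ X q) (hq : 0 < q) : ∫ ω, X ω ∂μ = 1 := by
  rw [integral_congr_ae (hX.ae_eq_indicator hq.ne'),
    integral_indicator_const (s := {ω | X ω = 1 / q}) _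
      (hX.measurable (measurableSet_singleton _)), smul_eq_mul,
    measureReal_def, hX.measure_eq, ENNReal.toReal_ofReal hq.le]
  field_simp

lemma variance_eq [IsProbabilityMeasure μ] (hX : IsInverseBernoulli μ X q) (hq : 0 < q) :
    Var[X; μ] = 1 / q - 1 := by
  rw [variance_eq_sub (hX.memLp 2), integral_congr_ae hX.sq_ae_eq, integral_const_mul,
    hX.integral_eq_one hq]
  ring

end IsInverseBernoulli

variable {ι : Type*} [Fintype ι] {D : ι → Ω → ℝ} {p : ι → ℝ}

lemma integral_sum_mul_inverseBernoulli [IsFiniteMeasure μ]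
    (hD : ∀ i, IsInverseBernoulli μ (D i) (p i)) (hp : ∀ i, 0 < p i) (a : ι → ℝ) : ∫ ω, ∑ i, a i * D i ω ∂μ = ∑ i, a i := by
  rw [integral_finsetSum _ fun i _ => (((hD i).memLp 1).integrable le_rfl).const_mul (a i)]
  exact Finset.sum_congr rfl fun i _ => by
    rw [integral_const_mul, (hD i).integral_eq_one (hp i), mul_one]

lemma variance_sum_mul_inverseBernoulli [IsProbabilityMeasure μ]
    (hD : ∀ i, IsInverseBernoulli μ (D i) (p i)) (hp : ∀ i, 0 < p i) (hindep : iIndepFun D μ)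
    (a : ι → ℝ) : Var[fun ω => ∑ i, a i * D i ω; μ] = ∑ i, a i ^ 2 * (1 / p i - 1) := by
  have hsum : (fun ω => ∑ i, a i * D i ω) = ∑ i, fun ω => a i * D i ω := by
    ext ω; simp only [Finset.sum_apply]
  rw [hsum, IndepFun.variance_sum (fun i _ => ((hD i).memLp 2).const_mul (a i))
    fun i _ j _ hij => (hindep.indepFun hij).comp (measurable_const_mul (a i))
      (measurable_const_mul (a j))]
  exact Finset.sum_congr rfl fun i _ => by rw [variance_const_mul, (hD i).variance_eq (hp i)]

end InverseBernoulli

lemma sq_mul_inv_sub_one_le {a u p L s C : ℝ} (hs : 0 < s) (hp : 0 < p)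
    (hmin : min 1 (s * u / L) ≤ p) (ha : 0 ≤ a) (hau : a ≤ C * u) (hC : 0 ≤ C) (huL : u ≤ L) :
    a ^ 2 * (1 / p - 1) ≤ L * C / s * a := by
  rcases ha.eq_or_lt with rfl | ha
  · simp
  have hu : 0 < u := pos_of_mul_pos_right (ha.trans_le hau) hC
  have hL : 0 < L := hu.trans_le huL
  rcases le_or_gt 1 p with hp1 | hp1
  · have : 1 / p - 1 ≤ 0 := by rw [sub_nonpos, div_le_one hp]; exact hp1
    calc a ^ 2 * (1 / p - 1) ≤ 0 := mul_nonpos_of_nonneg_of_nonpos (sq_nonneg a) this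
      _ ≤ L * C / s * a := by positivity
  · have hsu : s * u / L ≤ p := (min_le_iff.1 hmin).resolve_left (by linarith)
    have hinv : 1 / p ≤ L / (s * u) := by
      simpa only [one_div_div] using one_div_le_one_div_of_le (by positivity) hsu
    calc a ^ 2 * (1 / p - 1) ≤ a * (L / (s * u)) * a := by nlinarith
      _ ≤ C * u * (L / (s * u)) * a := by gcongr
      _ = L * C / s * a := by field_simp

lemma rhoV_mulVec_eq_zero_or_nonneg {n d : ℕ} {U : Matrix (Fin n) (Fin d) ℝ} {β τ : ℝ}
    (hτ1 : 1 / 2 ≤ τ) (hτ2 : τ ≤ 1) (hβ : ∀ x : Fin d → ℝ, linf x ≤ β * l1 (U *ᵥ x)) (y : Fin d → ℝ) :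
    rhoV τ (U *ᵥ y) = 0 ∨ 0 ≤ β := by
  rcases (l1_nonneg (U *ᵥ y)).eq_or_lt with h | h
  · left
    refine le_antisymm ?_ (rhoV_nonneg (by linarith) hτ2 _)
    simpa [← h] using rhoV_le_mul_l1 hτ1 (U *ᵥ y)
  · exact Or.inr (nonneg_of_mul_nonneg_left ((linf_nonneg y).trans (hβ y)) h)

lemma sum_rho_sq_mul_inv_sub_one_le {n d : ℕ} (U : Matrix (Fin n) (Fin d) ℝ) (y : Fin d → ℝ)
    {α β τ s : ℝ} {p : Fin n → ℝ} (hτ : 1 / 2 ≤ τ ∧ τ < 1) (hα : l1M U ≤ α)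
    (hβ : ∀ x : Fin d → ℝ, linf x ≤ β * l1 (U *ᵥ x)) (hs : 0 < s)
    (hmin : ∀ i, min 1 (s * (∑ j, |U i j|) / l1M U) ≤ p i) (hp : ∀ i, 0 < p i) :
    ∑ i, rho τ ((U *ᵥ y) i) ^ 2 * (1 / p i - 1) ≤
      (1 / s) * (τ / (1 - τ)) * (α * β) * rhoV τ (U *ᵥ y) ^ 2 := by
  obtain ⟨hτ1, hτ2⟩ := hτ
  set T := rhoV τ (U *ᵥ y)
  have hC : 0 ≤ τ * linf y := mul_nonneg (by linarith) (linf_nonneg y)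
  have hsum : ∑ i, rho τ ((U *ᵥ y) i) ^ 2 * (1 / p i - 1) ≤ l1M U * (τ * linf y) / s * T := by
    refine (Finset.sum_le_sum fun i _ => ?_).trans_eq (Finset.mul_sum _ _ _).symm
    refine sq_mul_inv_sub_one_le hs (hp i) (hmin i)
      (rho_nonneg (by linarith) hτ2.le _) ?_ hC (row_l1_le_l1M U i)
    calc rho τ ((U *ᵥ y) i) ≤ τ * |(U *ᵥ y) i| := rho_le_mul_abs hτ1 _
      _ ≤ τ * ((∑ j, |U i j|) * linf y) := by gcongr; exact abs_mulVec_le U y i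
      _ = τ * linf y * ∑ j, |U i j| := by ring
  rcases rhoV_mulVec_eq_zero_or_nonneg hτ1 hτ2.le hβ y with hT | hβ0
  · simpa [T, hT] using hsum
  have hlinf : linf y ≤ β * (T / (1 - τ)) := by
    refine (hβ y).trans (mul_le_mul_of_nonneg_left ?_ hβ0)
    rw [le_div_iff₀ (by linarith), mul_comm]
    exact mul_l1_le_rhoV hτ1 _
  have hL : 0 ≤ l1M U := Finset.sum_nonneg fun i _ => Finset.sum_nonneg fun j _ => abs_nonneg _
  have hLC : l1M U * (τ * linf y) ≤ α * (τ * (β * (T / (1 - τ)))) :=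
    mul_le_mul hα (by gcongr) hC (hL.trans hα)
  calc _ ≤ l1M U * (τ * linf y) / s * T := hsum
    _ ≤ α * (τ * (β * (T / (1 - τ)))) / s * T :=
      mul_le_mul_of_nonneg_right (div_le_div_of_nonneg_right hLC hs.le)
        (rhoV_nonneg (by linarith) hτ2.le _)
    _ = (1 / s) * (τ / (1 - τ)) * (α * β) * T ^ 2 := by ring

theorem sampling_mean_variance_general {Ω : Type*} [MeasurableSpace Ω]
    (μ : Measure Ω) [IsProbabilityMeasure μ] {n d : ℕ}
    (U : Matrix (Fin n) (Fin d) ℝ) (α β τ s : ℝ) (y : Fin d → ℝ)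
    (hτ : 1/2 ≤ τ ∧ τ < 1)
    (hα : l1M U ≤ α)
    (hβ : ∀ x : Fin d → ℝ, linf x ≤ β * l1 (U.mulVec x))
    (hs : 0 < s)
    (p : Fin n → ℝ)
    (hp : ∀ i, min 1 (s * (∑ j, |U i j|) / l1M U) ≤ p i ∧ 0 < p i ∧ p i ≤ 1)
    (D : Fin n → Ω → ℝ)
    (hmeas : ∀ i, Measurable (D i))
    (hindep : iIndepFun D μ)
    (hval : ∀ i, ∀ᵐ ω ∂μ, D i ω = 1 / p i ∨ D i ω = 0)
    (hprob : ∀ i, μ {ω | D i ω = 1 / p i} = ENNReal.ofReal (p i)) :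
    (∫ ω, rhoV τ (fun i => D i ω * U.mulVec y i) ∂μ) = rhoV τ (U.mulVec y) ∧
    (∫ ω, (rhoV τ (fun i => D i ω * U.mulVec y i) - rhoV τ (U.mulVec y))^2 ∂μ) ≤
      (1/s) * (τ / (1 - τ)) * (α * β) * (rhoV τ (U.mulVec y))^2 := by
  have hD : ∀ i, IsInverseBernoulli μ (D i) (p i) := fun i => ⟨hmeas i, hval i, hprob i⟩
  have hp0 : ∀ i, 0 < p i := fun i => (hp i).2.1
  set a : Fin n → ℝ := fun i => rho τ ((U *ᵥ y) i)
  have hY : (fun ω => rhoV τ (fun i => D i ω * (U *ᵥ y) i)) =ᵐ[μ]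
      fun ω => ∑ i, a i * D i ω := by
    filter_upwards [ae_all_iff.2 fun i => (hD i).ae_nonneg (hp0 i)] with ω hω
    exact Finset.sum_congr rfl fun i _ => (rho_mul_of_nonneg τ (hω i) _).trans (mul_comm _ _)
  have hmean : ∫ ω, ∑ i, a i * D i ω ∂μ = rhoV τ (U *ᵥ y) :=
    integral_sum_mul_inverseBernoulli hD hp0 a
  refine ⟨(integral_congr_ae hY).trans hmean, ?_⟩
  have hdev : (fun ω => (rhoV τ (fun i => D i ω * (U *ᵥ y) i) - rhoV τ (U *ᵥ y)) ^ 2) =ᵐ[μ]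
      fun ω => (∑ i, a i * D i ω - rhoV τ (U *ᵥ y)) ^ 2 := by
    filter_upwards [hY] with ω hω
    rw [hω]
  calc _ = Var[fun ω => ∑ i, a i * D i ω; μ] := by
        rw [integral_congr_ae hdev, variance_eq_integral (by fun_prop), hmean]
    _ = ∑ i, a i ^ 2 * (1 / p i - 1) := variance_sum_mul_inverseBernoulli hD hp0 hindep a
    _ ≤ _ := sum_rho_sq_mul_inv_sub_one_le U y hτ hα hβ hs (fun i => (hp i).1) hp0

theorem sampling_mean_variance {Ω : Type*} [MeasurableSpace Ω]
    (μ : Measure Ω) [IsProbabilityMeasure μ] {n d : ℕ}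
    (U : Matrix (Fin n) (Fin d) ℝ) (α β τ s : ℝ) (y : Fin d → ℝ)
    (hτ : 1/2 ≤ τ ∧ τ < 1)
    (hα : l1M U ≤ α)
    (hβ : ∀ x : Fin d → ℝ, linf x ≤ β * l1 (U.mulVec x))
    (hU : 0 < l1M U) (hs : 0 < s)
    (p : Fin n → ℝ)
    (hp : ∀ i, min 1 (s * (∑ j, |U i j|) / l1M U) ≤ p i ∧ 0 < p i ∧ p i ≤ 1)
    (D : Fin n → Ω → ℝ)
    (hmeas : ∀ i, Measurable (D i))
    (hindep : iIndepFun D μ)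
    (hval : ∀ i, ∀ᵐ ω ∂μ, D i ω = 1 / p i ∨ D i ω = 0)
    (hprob : ∀ i, μ {ω | D i ω = 1 / p i} = ENNReal.ofReal (p i)) :
    (∫ ω, rhoV τ (fun i => D i ω * U.mulVec y i) ∂μ) = rhoV τ (U.mulVec y) ∧
    (∫ ω, (rhoV τ (fun i => D i ω * U.mulVec y i) - rhoV τ (U.mulVec y))^2 ∂μ) ≤
      (1/s) * (τ / (1 - τ)) * (α * β) * (rhoV τ (U.mulVec y))^2 :=
  sampling_mean_variance_general μ U α β τ s y hτ hα hβ hs p hp D hmeas hindep hval hprob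
end
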